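/- arXiv:1012.2281 — 2 statements merged into one kernel-verified Lean document; each statement's English description precedes it below -/
import Mathlib

section
/- Let C be the separated invariant set of an iterated function system in G, let s > 0 be such that μ = ℋ^s⌊C satisfies μ(B(x,ρ)) ≤ A_μ ρ^s for all x ∈ C and ρ > 0, let K_ω be an s-homogeneous kernel with ω bounded on the support of μ-relevant differences, and let α_C ∈ (0,1] be a constant with dist(C_v, C∖C_v) ≥ α_C · diam(C_v) for every nonempty finite word v. Then there is a constant A_C, depending only on C and K_ω, such that for all finite words w, v with C_v ⊂ C_w and every point p ∈ G with dist(p, C_v) ≤ (α_C/2)·diam(C_v): |∫_{C_w∖C_v} K_ω(p,y) dμ(y)| ≤ |∫_{B(p, 2 diam(C_w))∖B(p, 2 diam(C_v))} K_ω(p,y) dμ(y)| + A_C. -/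
open MeasureTheory Metric Set
open scoped ENNReal NNReal

/-! Let `x ∈ C_v` be a point closest to `p`. By separation, points of `C ∖ C_v` are at distance
at least `(α/2)·diam C_v` from `p`, and points of `C ∖ C_w` at distance at least
`(α/2)·diam C_w`. Hence, up to the `μ`-null set outside `C`, the two domains of integration differ
by one piece inside `B(p, 2 diam C_v)` at distance `≥ (α/2)·diam C_v` from `p`, and one piece
inside `B(p, 2 diam C_w)` at distance `≥ (α/2)·diam C_w` from `p`. On a piece of scale `ρ` the
kernel is `O((αρ)^{-s})` while the growth bound gives mass `O(ρ^s)`, so each piece contributes at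
most `Mω Aμ (6/α)^s`, whatever its scale. -/

/-- A family of dilations on a metric group `G`: continuous group homomorphisms
`δ r : G → G` for `r > 0` with `δ 1 = id`, scaling the metric by `r`, and
satisfying `δ (r*s) = δ r ∘ δ s`. -/
structure Dilations (G : Type*) [MetricSpace G] [Group G] where
  δ : ℝ → G → G
  map_mul : ∀ r : ℝ, 0 < r → ∀ x y : G, δ r (x * y) = δ r x * δ r y
  continuous : ∀ r : ℝ, 0 < r → Continuous (δ r)
  map_one' : δ 1 = id
  dist_eq : ∀ r : ℝ, 0 < r → ∀ x y : G, dist (δ r x) (δ r y) = r * dist x y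
  comp : ∀ r s : ℝ, 0 < r → 0 < s → δ (r * s) = δ r ∘ δ s

/-- For a word `w = [i₁, …, iₘ]`, the composition `S_{i₁} ∘ ⋯ ∘ S_{iₘ}`. -/
def wordMap {G : Type*} {ι : Type*} (S : ι → G → G) : List ι → G → G
  | [] => id
  | i :: w => S i ∘ wordMap S w

/-- The `s`-homogeneous kernel `K_ω(x,y) = ω(x⁻¹·y) / d(x,y)^s`. -/
noncomputable def homKer {G : Type*} [MetricSpace G] [Group G] (ω : G → ℝ) (s : ℝ)
    (x y : G) : ℝ :=
  ω (x⁻¹ * y) / dist x y ^ s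

section WordMaps

variable {X ι : Type*}

lemma wordMap_image_subset (S : ι → X → X) {C : Set X} (hC : ∀ i, S i '' C ⊆ C) (v : List ι) :
    wordMap S v '' C ⊆ C := by
  induction v with
  | nil => simp [wordMap]
  | cons i w ih =>
    rw [wordMap, image_comp]
    exact (image_mono ih).trans (hC i)

lemma nontrivial_of_pairwise_disjoint_image [Nontrivial ι] (S : ι → X → X) {C : Set X}
    (hC : C.Nonempty) (hSC : ∀ i, S i '' C ⊆ C)
    (hsep : Pairwise fun i j => Disjoint (S i '' C) (S j '' C)) : C.Nontrivial := by
  obtain ⟨i, j, hij⟩ := exists_pair_ne ι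
  obtain ⟨x, hx⟩ := hC.image (S i)
  obtain ⟨y, hy⟩ := hC.image (S j)
  exact ⟨x, hSC i hx, y, hSC j hy, fun h => disjoint_left.mp (hsep hij) hx (h ▸ hy)⟩

variable {S : ι → X → X} {r : ι → ℝ}

lemma dist_wordMap [PseudoMetricSpace X] (hS : ∀ i x y, dist (S i x) (S i y) = r i * dist x y)
    (v : List ι) (x y : X) :
    dist (wordMap S v x) (wordMap S v y) = (v.map r).prod * dist x y := by
  induction v generalizing x y with
  | nil => simp [wordMap]
  | cons i w ih =>
    simp only [wordMap, Function.comp_apply, hS, ih, List.map_cons, List.prod_cons]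
    ring

lemma lipschitzWith_wordMap [PseudoMetricSpace X]
    (hS : ∀ i x y, dist (S i x) (S i y) = r i * dist x y) (v : List ι) :
    LipschitzWith (v.map r).prod.toNNReal (wordMap S v) :=
  LipschitzWith.of_dist_le' fun x y => (dist_wordMap hS v x y).le

lemma injective_wordMap [MetricSpace X] (hr : ∀ i, 0 < r i)
    (hS : ∀ i x y, dist (S i x) (S i y) = r i * dist x y) (v : List ι) :
    Function.Injective (wordMap S v) := by
  intro x y hxy
  have hprod : 0 < (v.map r).prod := List.prod_pos fun a ha => by
    obtain ⟨i, -, rfl⟩ := List.mem_map.mp ha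
    exact hr i
  have h := dist_wordMap hS v x y
  rw [hxy, dist_self, eq_comm, mul_eq_zero] at h
  exact dist_eq_zero.mp (h.resolve_left hprod.ne')

lemma diam_wordMap_image_pos [MetricSpace X] (hr : ∀ i, 0 < r i)
    (hS : ∀ i x y, dist (S i x) (S i y) = r i * dist x y) {C : Set X} (hC : IsCompact C)
    (hCnt : C.Nontrivial) (v : List ι) : 0 < diam (wordMap S v '' C) :=
  diam_pos (hCnt.image (injective_wordMap hr hS v))
    (hC.image (lipschitzWith_wordMap hS v).continuous).isBounded

end WordMaps

lemma Dilations.dist_mul_δ {G : Type*} [MetricSpace G] [Group G] (D : Dilations G)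
    (hleft : ∀ q : G, Isometry fun x : G => q * x) (q : G) {r : ℝ} (hr : 0 < r) (x y : G) :
    dist (q * D.δ r x) (q * D.δ r y) = r * dist x y := by
  rw [(hleft q).dist_eq, D.dist_eq r hr]

section SeparatedPiece

variable {X : Type*} [PseudoMetricSpace X]

def IsSeparatedPiece (α : ℝ) (C K : Set X) : Prop :=
  ∀ x ∈ K, ∀ y ∈ C \ K, α * diam K ≤ dist x y

lemma isSeparatedPiece_self (α : ℝ) (C : Set X) : IsSeparatedPiece α C C :=
  fun _ _ _ hy => (hy.2 hy.1).elim

lemma IsSeparatedPiece.half_mul_diam_le_dist {α : ℝ} {C K : Set X} {x p y : X}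
    (hK : IsSeparatedPiece α C K) (hx : x ∈ K) (hpx : dist p x ≤ α / 2 * diam K)
    (hy : y ∈ C \ K) : α / 2 * diam K ≤ dist p y := by
  have := hK x hx y hy
  have := dist_triangle_left x y p
  linarith

end SeparatedPiece

lemma mem_closedBall_two_mul_diam {X : Type*} [PseudoMetricSpace X] {J : Set X} {p x y : X}
    (hJ : Bornology.IsBounded J) (hx : x ∈ J) (hpx : dist p x ≤ diam J) (hy : y ∈ J) :
    y ∈ closedBall p (2 * diam J) := by
  have := dist_le_diam_of_mem hJ hx hy
  have := dist_triangle p x y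
  rw [mem_closedBall, dist_comm]
  linarith

lemma IsCompact.exists_dist_le_of_infDist_le {X : Type*} [MetricSpace X] {L : Set X} {p : X}
    {c : ℝ} (hL : IsCompact L) (hLne : L.Nonempty) (hp : infDist p L ≤ c) :
    ∃ x ∈ L, dist p x ≤ c := by
  obtain ⟨x, hxL, hx⟩ := hL.exists_infDist_eq_dist hLne p
  exact ⟨x, hxL, hx ▸ hp⟩

lemma norm_setIntegral_le_add_norm_setIntegral_sdiff {X E : Type*} [MeasurableSpace X]
    [NormedAddCommGroup E] [NormedSpace ℝ E] {μ : Measure X} {f : X → E} {s t : Set X}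
    (hs : MeasurableSet s) (ht : MeasurableSet t) (hfs : IntegrableOn f s μ)
    (hft : IntegrableOn f t μ) :
    ‖∫ x in s, f x ∂μ‖ ≤
      ‖∫ x in t, f x ∂μ‖ + ‖∫ x in s \ t, f x ∂μ‖ + ‖∫ x in t \ s, f x ∂μ‖ := by
  have hsplit_s := integral_inter_add_sdiff ht hfs
  have hsplit_t := integral_inter_add_sdiff hs hft
  rw [inter_comm] at hsplit_t
  calc ‖∫ x in s, f x ∂μ‖
      = ‖∫ x in t, f x ∂μ + (∫ x in s \ t, f x ∂μ - ∫ x in t \ s, f x ∂μ)‖ := by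
        rw [← hsplit_s, ← hsplit_t]; abel_nf
    _ ≤ _ := by
        rw [add_assoc]
        exact (norm_add_le _ _).trans (by gcongr; exact norm_sub_le _ _)

section HomogeneousKernel

variable {G : Type*} [MetricSpace G] [Group G] {ω : G → ℝ} {s M : ℝ} {p : G}

lemma continuousOn_homKer (hω : ContinuousOn ω {x | x ≠ 1}) (hs : 0 ≤ s)
    (hmul : Continuous fun y : G => p⁻¹ * y) : ContinuousOn (homKer ω s p) {y | y ≠ p} := by
  refine ContinuousOn.div (hω.comp hmul.continuousOn fun y hy h => hy (inv_mul_eq_one.mp h).symm)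
    ((continuous_const.dist continuous_id).rpow_const fun _ => Or.inr hs).continuousOn ?_
  exact fun y hy => (Real.rpow_pos_of_pos (dist_pos.mpr (Ne.symm hy)) s).ne'

lemma abs_homKer_le (hωb : ∀ x, |ω x| ≤ M) (hs : 0 ≤ s) {c : ℝ} (hc : 0 < c) {y : G}
    (hy : c ≤ dist p y) : |homKer ω s p y| ≤ M / c ^ s := by
  have hdist : 0 < dist p y := hc.trans_le hy
  rw [homKer, abs_div, abs_of_pos (Real.rpow_pos_of_pos hdist s)]
  exact div_le_div₀ ((abs_nonneg _).trans (hωb 1)) (hωb _) (Real.rpow_pos_of_pos hc s)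
    (Real.rpow_le_rpow hc.le hy hs)

variable [MeasurableSpace G] {μ : Measure G} {E : Set G}

lemma integrableOn_homKer [OpensMeasurableSpace G] (hω : ContinuousOn ω {x | x ≠ 1})
    (hωb : ∀ x, |ω x| ≤ M) (hs : 0 ≤ s) (hmul : Continuous fun y : G => p⁻¹ * y)
    (hE : MeasurableSet E) (hμE : μ E < ∞) {c : ℝ} (hc : 0 < c)
    (hEp : ∀ y ∈ E, c ≤ dist p y) : IntegrableOn (homKer ω s p) E μ := by
  have hEp' : E ⊆ {y | y ≠ p} := fun y hy h => by
    have := hc.trans_le (hEp y hy)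
    simp [h] at this
  refine ⟨((continuousOn_homKer hω hs hmul).mono hEp').aestronglyMeasurable hE,
    HasFiniteIntegral.restrict_of_bounded (C := M / c ^ s) hμE ?_⟩
  exact ae_restrict_of_forall_mem hE fun y hy => abs_homKer_le hωb hs hc (hEp y hy)

lemma abs_setIntegral_homKer_le (hωb : ∀ x, |ω x| ≤ M) (hs : 0 ≤ s) {c B : ℝ} (hc : 0 < c)
    (hB : 0 ≤ B) (hμE : μ E ≤ ENNReal.ofReal B) (hEp : ∀ᵐ y ∂μ, y ∈ E → c ≤ dist p y) :
    |∫ y in E, homKer ω s p y ∂μ| ≤ M / c ^ s * B := by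
  have hM : 0 ≤ M / c ^ s := div_nonneg ((abs_nonneg _).trans (hωb 1)) (by positivity)
  calc |∫ y in E, homKer ω s p y ∂μ| ≤ M / c ^ s * μ.real E := by
        simpa only [Real.norm_eq_abs] using norm_setIntegral_le_of_norm_le_const_ae'
          (hμE.trans_lt ENNReal.ofReal_lt_top)
          (hEp.mono fun y hy hyE =>
            (Real.norm_eq_abs _).trans_le (abs_homKer_le hωb hs hc (hy hyE)))
    _ ≤ M / c ^ s * B := mul_le_mul_of_nonneg_left (ENNReal.toReal_le_of_le_ofReal hB hμE) hM

end HomogeneousKernel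

section Cylinders

variable {G : Type*} [MetricSpace G] [Group G] [MeasurableSpace G] {μ : Measure G}
  {ω : G → ℝ} {s M Aμ α : ℝ} {C : Set G} {p : G}

lemma abs_setIntegral_homKer_le_of_growth
    (hgrowth : ∀ x ∈ C, ∀ ρ : ℝ, 0 < ρ → μ (closedBall x ρ) ≤ ENNReal.ofReal (Aμ * ρ ^ s))
    (hAμ : 0 ≤ Aμ) (hωb : ∀ x, |ω x| ≤ M) (hs : 0 ≤ s) (hα : 0 < α) {x : G} (hxC : x ∈ C)
    {ρ : ℝ} (hρ : 0 < ρ) (hpx : dist p x ≤ ρ) {E : Set G} (hE : E ⊆ closedBall p (2 * ρ))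
    (hEp : ∀ᵐ y ∂μ, y ∈ E → α / 2 * ρ ≤ dist p y) :
    |∫ y in E, homKer ω s p y ∂μ| ≤ M * Aμ * (6 / α) ^ s := by
  have hμE : μ E ≤ ENNReal.ofReal (Aμ * (3 * ρ) ^ s) :=
    (measure_mono (hE.trans (closedBall_subset_closedBall' (by linarith)))).trans
      (hgrowth x hxC _ (by positivity))
  calc |∫ y in E, homKer ω s p y ∂μ|
      ≤ M / (α / 2 * ρ) ^ s * (Aμ * (3 * ρ) ^ s) :=
        abs_setIntegral_homKer_le hωb hs (by positivity) (by positivity) hμE hEp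
    _ = M * Aμ * ((3 * ρ) / (α / 2 * ρ)) ^ s := by
        rw [Real.div_rpow (by positivity) (by positivity)]; ring
    _ = M * Aμ * (6 / α) ^ s := by
        congr 2; field_simp; ring

theorem abs_setIntegral_homKer_sdiff_le [OpensMeasurableSpace G]
    (hmul : Continuous fun y : G => p⁻¹ * y) (hCae : ∀ᵐ y ∂μ, y ∈ C)
    (hgrowth : ∀ x ∈ C, ∀ ρ : ℝ, 0 < ρ → μ (closedBall x ρ) ≤ ENNReal.ofReal (Aμ * ρ ^ s))
    (hAμ : 0 ≤ Aμ) (hω : ContinuousOn ω {x | x ≠ 1}) (hωb : ∀ x, |ω x| ≤ M) (hs : 0 ≤ s)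
    (hα0 : 0 < α) (hα1 : α ≤ 1) {K L : Set G} (hK : IsCompact K) (hL : IsCompact L)
    (hLK : L ⊆ K) (hKC : K ⊆ C) (hdL : 0 < diam L)
    (hKsep : IsSeparatedPiece α C K) (hLsep : IsSeparatedPiece α C L)
    {x : G} (hxL : x ∈ L) (hpx : dist p x ≤ α / 2 * diam L) :
    |∫ y in K \ L, homKer ω s p y ∂μ| ≤
      |∫ y in closedBall p (2 * diam K) \ closedBall p (2 * diam L), homKer ω s p y ∂μ| +
        2 * (M * Aμ * (6 / α) ^ s) := by
  set A := closedBall p (2 * diam K) \ closedBall p (2 * diam L)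
  have hdLK : diam L ≤ diam K := diam_mono hLK hK.isBounded
  have hdK : 0 < diam K := hdL.trans_le hdLK
  have hpxL : dist p x ≤ diam L := hpx.trans (by nlinarith)
  have hpxK : dist p x ≤ diam K := hpxL.trans hdLK
  have hxC : x ∈ C := hKC (hLK hxL)
  have hKB : K ⊆ closedBall p (2 * diam K) := fun _ =>
    mem_closedBall_two_mul_diam hK.isBounded (hLK hxL) hpxK
  have hLB : L ⊆ closedBall p (2 * diam L) := fun _ =>
    mem_closedBall_two_mul_diam hL.isBounded hxL hpxL
  have far_of_not_mem_L {y : G} (hy : y ∈ C \ L) : α / 2 * diam L ≤ dist p y :=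
    hLsep.half_mul_diam_le_dist hxL hpx hy
  have far_of_not_mem_K {y : G} (hy : y ∈ C \ K) : α / 2 * diam K ≤ dist p y :=
    hKsep.half_mul_diam_le_dist (hLK hxL) (hpx.trans (by gcongr)) hy
  have hKLm : MeasurableSet (K \ L) := hK.measurableSet.diff hL.measurableSet
  have hAm : MeasurableSet A := measurableSet_closedBall.diff measurableSet_closedBall
  have hμB : μ (closedBall p (2 * diam K)) < ∞ :=
    ((measure_mono (closedBall_subset_closedBall' (by linarith))).trans
      (hgrowth x hxC (3 * diam K) (by positivity))).trans_lt ENNReal.ofReal_lt_top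
  have hIKL : IntegrableOn (homKer ω s p) (K \ L) μ :=
    integrableOn_homKer hω hωb hs hmul hKLm
      ((measure_mono (sdiff_subset.trans hKB)).trans_lt hμB)
      (by positivity) fun y hy => far_of_not_mem_L ⟨hKC hy.1, hy.2⟩
  have hIA : IntegrableOn (homKer ω s p) A μ :=
    integrableOn_homKer hω hωb hs hmul hAm ((measure_mono sdiff_subset).trans_lt hμB)
      (c := 2 * diam L) (by positivity) fun y hy => by
        simpa [dist_comm] using (not_le.mp (mem_closedBall.not.mp hy.2)).le
  have hKL_A : |∫ y in (K \ L) \ A, homKer ω s p y ∂μ| ≤ M * Aμ * (6 / α) ^ s := by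
    refine abs_setIntegral_homKer_le_of_growth hgrowth hAμ hωb hs hα0 hxC
      hdL hpxL (fun y hy => ?_)
      (.of_forall fun y hy => far_of_not_mem_L ⟨hKC hy.1.1, hy.1.2⟩)
    by_contra hyL
    exact hy.2 ⟨hKB hy.1.1, hyL⟩
  have hA_KL : |∫ y in A \ (K \ L), homKer ω s p y ∂μ| ≤ M * Aμ * (6 / α) ^ s := by
    refine abs_setIntegral_homKer_le_of_growth hgrowth hAμ hωb hs hα0 hxC
      hdK hpxK (fun y hy => hy.1.1) ?_
    filter_upwards [hCae] with y hyC hy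
    have hyL : y ∉ L := fun hyL => hy.1.2 (hLB hyL)
    exact far_of_not_mem_K ⟨hyC, fun hyK => hy.2 ⟨hyK, hyL⟩⟩
  have := norm_setIntegral_le_add_norm_setIntegral_sdiff hKLm hAm hIKL hIA
  simp only [Real.norm_eq_abs] at this
  linarith

end Cylinders

theorem stmt3_general {G : Type*} [MetricSpace G] [Group G] [MeasurableSpace G] [BorelSpace G]
    (hleft : ∀ q : G, Isometry fun x : G => q * x)
    (D : Dilations G)
    {N : ℕ} (hN : 2 ≤ N) (q : Fin N → G) (r : Fin N → ℝ)
    (hr : ∀ i, r i ∈ Set.Ioo (0 : ℝ) 1)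
    (S : Fin N → G → G) (hS : ∀ i x, S i x = q i * D.δ (r i) x)
    (C : Set G) (hCc : IsCompact C) (hCne : C.Nonempty)
    (hCinv : C = ⋃ i, S i '' C)
    (hsep : Pairwise fun i j => Disjoint (S i '' C) (S j '' C))
    {s : ℝ} (hs : 0 < s)
    (μ : Measure G) (hμ : μ = μH[s].restrict C)
    (Aμ : ℝ) (hAμ : 0 < Aμ)
    (hgrowth : ∀ x ∈ C, ∀ ρ : ℝ, 0 < ρ → μ (closedBall x ρ) ≤ ENNReal.ofReal (Aμ * ρ ^ s))
    (ω : G → ℝ) (hωc : ContinuousOn ω {x : G | x ≠ 1})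
    (Mω : ℝ) (hωb : ∀ x : G, |ω x| ≤ Mω)
    (α : ℝ) (hα0 : 0 < α) (hα1 : α ≤ 1)
    (hαsep : ∀ v : List (Fin N), v ≠ [] →
      ∀ p ∈ wordMap S v '' C, ∀ y ∈ C \ wordMap S v '' C,
        α * diam (wordMap S v '' C) ≤ dist p y) :
    ∃ A : ℝ, ∀ w v : List (Fin N), ∀ p : G,
      wordMap S v '' C ⊆ wordMap S w '' C →
      infDist p (wordMap S v '' C) ≤ α / 2 * diam (wordMap S v '' C) →
      |∫ y in (wordMap S w '' C) \ (wordMap S v '' C), homKer ω s p y ∂μ| ≤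
        |∫ y in closedBall p (2 * diam (wordMap S w '' C)) \
            closedBall p (2 * diam (wordMap S v '' C)), homKer ω s p y ∂μ| + A := by
  have : Nontrivial (Fin N) := Fin.nontrivial_iff_two_le.mpr hN
  have hSdist : ∀ i x y, dist (S i x) (S i y) = r i * dist x y := fun i x y => by
    rw [hS, hS]
    exact D.dist_mul_δ hleft (q i) (hr i).1 x y
  have hSC : ∀ i, S i '' C ⊆ C := fun i =>
    (subset_iUnion (fun j => S j '' C) i).trans hCinv.superset
  have hcyl : ∀ v, IsCompact (wordMap S v '' C) := fun v =>
    hCc.image (lipschitzWith_wordMap hSdist v).continuous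
  have hdiam : ∀ v, 0 < diam (wordMap S v '' C) := diam_wordMap_image_pos (fun i => (hr i).1)
    hSdist hCc (nontrivial_of_pairwise_disjoint_image S hCne hSC hsep)
  have hpiece : ∀ v, IsSeparatedPiece α C (wordMap S v '' C)
    | [] => by simpa only [wordMap, image_id] using isSeparatedPiece_self α C
    | i :: v => hαsep (i :: v) (List.cons_ne_nil i v)
  subst hμ
  refine ⟨2 * (Mω * Aμ * (6 / α) ^ s), fun w v p hvw hp => ?_⟩
  obtain ⟨x, hxv, hpx⟩ :=
    (hcyl v).exists_dist_le_of_infDist_le (hCne.image (wordMap S v)) hp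
  exact abs_setIntegral_homKer_sdiff_le (hleft p⁻¹).continuous
    (ae_restrict_mem hCc.measurableSet) hgrowth hAμ.le hωc hωb hs.le hα0 hα1 (hcyl w) (hcyl v)
    hvw (wordMap_image_subset S hSC w) (hdiam v) (hpiece w) (hpiece v) hxv hpx

/-- **Theorem (comparison of cylindrical and ball truncations).** For a separated
self-similar set `C` with `μ = ℋ^s⌊C` of growth `μ(B(x,ρ)) ≤ A_μ ρ^s`, a bounded
`s`-homogeneous kernel `K_ω`, and a separation constant `α_C ∈ (0,1]`, there is a constant
`A_C` such that for all words `w, v` with `C_v ⊆ C_w` and all points `p` with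
`dist(p, C_v) ≤ (α_C/2)·diam(C_v)`:
`|∫_{C_w∖C_v} K_ω(p,y) dμ| ≤ |∫_{B(p,2diam C_w)∖B(p,2diam C_v)} K_ω(p,y) dμ| + A_C`. -/
theorem stmt3 {G : Type*} [MetricSpace G] [Group G] [CompleteSpace G]
    [TopologicalSpace.SeparableSpace G] [MeasurableSpace G] [BorelSpace G]
    (hleft : ∀ q : G, Isometry fun x : G => q * x)
    (D : Dilations G)
    {N : ℕ} (hN : 2 ≤ N) (q : Fin N → G) (r : Fin N → ℝ)
    (hr : ∀ i, r i ∈ Set.Ioo (0 : ℝ) 1)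
    (S : Fin N → G → G) (hS : ∀ i x, S i x = q i * D.δ (r i) x)
    (C : Set G) (hCc : IsCompact C) (hCne : C.Nonempty)
    (hCinv : C = ⋃ i, S i '' C)
    (hsep : Pairwise fun i j => Disjoint (S i '' C) (S j '' C))
    {s : ℝ} (hs : 0 < s)
    (μ : Measure G) (hμ : μ = μH[s].restrict C)
    (Aμ : ℝ) (hAμ : 0 < Aμ)
    (hgrowth : ∀ x ∈ C, ∀ ρ : ℝ, 0 < ρ → μ (closedBall x ρ) ≤ ENNReal.ofReal (Aμ * ρ ^ s))
    (ω : G → ℝ) (hωc : ContinuousOn ω {x : G | x ≠ 1})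
    (Mω : ℝ) (hωb : ∀ x : G, |ω x| ≤ Mω)
    (hωh : ∀ x : G, x ≠ 1 → ∀ ρ : ℝ, 0 < ρ → ω (D.δ ρ x) = ω x)
    (α : ℝ) (hα0 : 0 < α) (hα1 : α ≤ 1)
    (hαsep : ∀ v : List (Fin N), v ≠ [] →
      ∀ p ∈ wordMap S v '' C, ∀ y ∈ C \ wordMap S v '' C,
        α * diam (wordMap S v '' C) ≤ dist p y) :
    ∃ A : ℝ, ∀ w v : List (Fin N), ∀ p : G,
      wordMap S v '' C ⊆ wordMap S w '' C →
      infDist p (wordMap S v '' C) ≤ α / 2 * diam (wordMap S v '' C) →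
      |∫ y in (wordMap S w '' C) \ (wordMap S v '' C), homKer ω s p y ∂μ| ≤
        |∫ y in closedBall p (2 * diam (wordMap S w '' C)) \
            closedBall p (2 * diam (wordMap S v '' C)), homKer ω s p y ∂μ| + A :=
  stmt3_general hleft D hN q r hr S hS C hCc hCne hCinv hsep hs μ hμ Aμ hAμ hgrowth ω hωc Mω hωb α
    hα0 hα1 hαsep
end

section
/- Fix n ≥ 1, an even integer N ≥ 2 and 0 < r < 1/N, and suppose additionally r < 1/(16n). Then every point p ∈ C_{r,N} ∖ S_0(C_{r,N}) satisfies p_{2n+1} > 0. -/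
open MeasureTheory Metric Set
open scoped ENNReal NNReal

/-- The Heisenberg group `ℍⁿ = ℝ^{2n+1}`, with horizontal coordinates
`a = (p_1,…,p_n)`, `b = (p_{n+1},…,p_{2n})` and vertical coordinate `t = p_{2n+1}`. -/
@[ext] structure Heis (n : ℕ) where
  a : Fin n → ℝ
  b : Fin n → ℝ
  t : ℝ

namespace Heis

variable {n : ℕ}

/-- The symplectic form `Σ (p_i q_{i+n} − p_{i+n} q_i)`. -/
def symp (p q : Heis n) : ℝ := ∑ i, (p.a i * q.b i - p.b i * q.a i)

/-- Heisenberg group product. -/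
instance : Mul (Heis n) :=
  ⟨fun p q => ⟨p.a + q.a, p.b + q.b, p.t + q.t - 2 * symp p q⟩⟩

instance : One (Heis n) := ⟨⟨0, 0, 0⟩⟩

instance : Inv (Heis n) := ⟨fun p => ⟨-p.a, -p.b, -p.t⟩⟩

/-- `|p'|²`, the squared Euclidean norm of the horizontal part. -/
def hsq (p : Heis n) : ℝ := ∑ i, p.a i ^ 2 + ∑ i, p.b i ^ 2

/-- The Korányi norm `‖p‖ = (|p'|⁴ + p_{2n+1}²)^{1/4}`. -/
noncomputable def knorm (p : Heis n) : ℝ := (hsq p ^ 2 + p.t ^ 2) ^ ((1 : ℝ) / 4)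

/-- The left-invariant Korányi distance `d(p,q) = ‖p⁻¹·q‖`. -/
noncomputable def hdist (p q : Heis n) : ℝ := knorm (p⁻¹ * q)

/-- The dilations `δ_r(p) = (r p₁, …, r p_{2n}, r² p_{2n+1})`. -/
def dil (r : ℝ) (p : Heis n) : Heis n := ⟨r • p.a, r • p.b, r ^ 2 * p.t⟩

/-- Identification of `ℝ^{2n+1}` (as a product of standard spaces) with `Heis n`. -/
def toHeis (x : ((Fin n → ℝ) × (Fin n → ℝ)) × ℝ) : Heis n := ⟨x.1.1, x.1.2, x.2⟩

/-- Partial derivative in the direction of the coordinate `a i`. -/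
noncomputable def pa (f : Heis n → ℝ) (i : Fin n) (p : Heis n) : ℝ :=
  deriv (fun s : ℝ => f ⟨Function.update p.a i s, p.b, p.t⟩) (p.a i)

/-- Partial derivative in the direction of the coordinate `b i`. -/
noncomputable def pb (f : Heis n → ℝ) (i : Fin n) (p : Heis n) : ℝ :=
  deriv (fun s : ℝ => f ⟨p.a, Function.update p.b i s, p.t⟩) (p.b i)

/-- Partial derivative in the vertical direction. -/
noncomputable def pt (f : Heis n → ℝ) (p : Heis n) : ℝ :=
  deriv (fun s : ℝ => f ⟨p.a, p.b, s⟩) p.t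

/-- The horizontal vector field `X_i = ∂_i + 2 x_{i+n} ∂_{2n+1}` applied to `f`. -/
noncomputable def Xd (f : Heis n → ℝ) (i : Fin n) (p : Heis n) : ℝ :=
  pa f i p + 2 * p.b i * pt f p

/-- The horizontal vector field `Y_i = ∂_{i+n} − 2 x_i ∂_{2n+1}` applied to `f`. -/
noncomputable def Yd (f : Heis n → ℝ) (i : Fin n) (p : Heis n) : ℝ :=
  pb f i p - 2 * p.a i * pt f p

/-- The Euclidean norm `|∇_H f(p)|` of the horizontal gradient. -/
noncomputable def gradNorm (f : Heis n → ℝ) (p : Heis n) : ℝ :=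
  Real.sqrt (∑ i, Xd f i p ^ 2 + ∑ i, Yd f i p ^ 2)

/-- The sub-Laplacian `Δ_H = Σ (X_i² + Y_i²)`. -/
noncomputable def subLap (f : Heis n → ℝ) (p : Heis n) : ℝ :=
  ∑ i, (Xd (fun y => Xd f i y) i p + Yd (fun y => Yd f i y) i p)

/-- `C^k` smoothness of `f` on `U ⊆ Heis n`, via the identification with `ℝ^{2n+1}`. -/
def IsCk (k : ℕ∞) (f : Heis n → ℝ) (U : Set (Heis n)) : Prop :=
  ContDiffOn ℝ k (f ∘ toHeis) (toHeis ⁻¹' U)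

/-- `f` is `Δ_H`-harmonic on an open set `U`: it is `C²` there and `Δ_H f = 0` on `U`. -/
def HarmonicOn (f : Heis n → ℝ) (U : Set (Heis n)) : Prop :=
  IsCk 2 f U ∧ ∀ p ∈ U, subLap f p = 0

end Heis

namespace Heis

/-- Index set for the IFS `𝒮_{r,N}`: `none` indexes `S_0 = δ_r`, and `some (g, i)` the map
`τ_{(z_g, 1/2 + i/N²)} ∘ δ_r`, where `g : (Fin n ⊕ Fin n) → Fin N` enumerates the grid
points `z_g = (g(·)/N)` of `{0, 1/N, …, (N−1)/N}^{2n}` and `i ∈ {0, …, N²/2 − 1}`.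
In total there are `N^{2n+2}/2 + 1` maps. -/
def CanIdx (n N : ℕ) : Type := Option (((Fin n ⊕ Fin n) → Fin N) × Fin (N ^ 2 / 2))

/-- The translation point `(z_g, 1/2 + i/N²) ∈ ℍⁿ`. -/
noncomputable def canPt (n N : ℕ) (g : (Fin n ⊕ Fin n) → Fin N) (i : Fin (N ^ 2 / 2)) :
    Heis n :=
  ⟨fun k => (g (Sum.inl k) : ℝ) / N, fun k => (g (Sum.inr k) : ℝ) / N,
    1 / 2 + (i : ℝ) / N ^ 2⟩

/-- The similarities of the IFS `𝒮_{r,N}`. -/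
noncomputable def canS (n N : ℕ) (r : ℝ) : CanIdx n N → Heis n → Heis n
  | none => dil r
  | some (g, i) => fun p => canPt n N g i * dil r p

/-- `C` is the invariant set of `𝒮_{r,N}`: `C = ⋃_j S_j(C)`. -/
def IsInvariantSet (n N : ℕ) (r : ℝ) (C : Set (Heis n)) : Prop :=
  C = ⋃ j : CanIdx n N, canS n N r j '' C

end Heis


namespace Heis

variable {n : ℕ}

lemma mul_a' (p q : Heis n) (k : Fin n) : (p * q).a k = p.a k + q.a k := rfl
lemma mul_b' (p q : Heis n) (k : Fin n) : (p * q).b k = p.b k + q.b k := rfl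
lemma mul_t' (p q : Heis n) : (p * q).t = p.t + q.t - 2 * symp p q := rfl
lemma inv_a' (p : Heis n) (k : Fin n) : (p⁻¹).a k = -p.a k := rfl
lemma inv_b' (p : Heis n) (k : Fin n) : (p⁻¹).b k = -p.b k := rfl
lemma inv_t' (p : Heis n) : (p⁻¹).t = -p.t := rfl
lemma dil_a' (r : ℝ) (p : Heis n) (k : Fin n) : (dil r p).a k = r * p.a k := rfl
lemma dil_b' (r : ℝ) (p : Heis n) (k : Fin n) : (dil r p).b k = r * p.b k := rfl
lemma dil_t' (r : ℝ) (p : Heis n) : (dil r p).t = r ^ 2 * p.t := rfl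

lemma symp_dil_right (r : ℝ) (p q : Heis n) : symp p (dil r q) = r * symp p q := by
  unfold symp
  rw [Finset.mul_sum]
  refine Finset.sum_congr rfl fun i _ => ?_
  rw [dil_a', dil_b']
  ring

lemma symp_inv_left (p q : Heis n) : symp p⁻¹ q = -symp p q := by
  unfold symp
  rw [← Finset.sum_neg_distrib]
  refine Finset.sum_congr rfl fun i _ => ?_
  rw [inv_a', inv_b']
  ring

lemma abs_symp_le (p q : Heis n) (Ap Aq : ℝ) (hAp0 : 0 ≤ Ap)
    (hpa : ∀ k, |p.a k| ≤ Ap) (hpb : ∀ k, |p.b k| ≤ Ap)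
    (hqa : ∀ k, |q.a k| ≤ Aq) (hqb : ∀ k, |q.b k| ≤ Aq) :
    |symp p q| ≤ 2 * n * (Ap * Aq) := by
  have h : ∀ i : Fin n, |p.a i * q.b i - p.b i * q.a i| ≤ 2 * (Ap * Aq) := by
    intro i
    have h1 : |p.a i * q.b i| ≤ Ap * Aq := by
      rw [abs_mul]; exact mul_le_mul (hpa i) (hqb i) (abs_nonneg _) hAp0
    have h2 : |p.b i * q.a i| ≤ Ap * Aq := by
      rw [abs_mul]; exact mul_le_mul (hpb i) (hqa i) (abs_nonneg _) hAp0
    calc |p.a i * q.b i - p.b i * q.a i| ≤ |p.a i * q.b i| + |p.b i * q.a i| :=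
          abs_sub _ _
      _ ≤ 2 * (Ap * Aq) := by linarith
  calc |symp p q| ≤ ∑ i, |p.a i * q.b i - p.b i * q.a i| :=
        Finset.abs_sum_le_sum_abs _ _
    _ ≤ ∑ _i : Fin n, 2 * (Ap * Aq) := Finset.sum_le_sum fun i _ => h i
    _ = 2 * n * (Ap * Aq) := by
        rw [Finset.sum_const, Finset.card_univ, Fintype.card_fin, nsmul_eq_mul]; ring

lemma canPt_bounds {N : ℕ} (hN : 2 ≤ N) (g : (Fin n ⊕ Fin n) → Fin N)
    (i : Fin (N ^ 2 / 2)) :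
    (∀ k, |(canPt n N g i).a k| ≤ 1) ∧ (∀ k, |(canPt n N g i).b k| ≤ 1) ∧
      1 / 2 ≤ (canPt n N g i).t ∧ (canPt n N g i).t ≤ 1 := by
  have hN0 : (0:ℝ) < N := by
    have : 0 < N := by omega
    exact_mod_cast this
  have hcoord : ∀ m : Fin N, |(m : ℝ) / N| ≤ 1 := by
    intro m
    rw [abs_of_nonneg (by positivity), div_le_one hN0]
    have : (m : ℕ) < N := m.isLt
    exact_mod_cast this.le
  have hta : (canPt n N g i).t = 1 / 2 + (i : ℝ) / N ^ 2 := rfl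
  have hi0 : 0 ≤ (i : ℝ) / N ^ 2 := by positivity
  have hi1 : (i : ℝ) / N ^ 2 ≤ 1 / 2 := by
    have h1 : (i : ℕ) < N ^ 2 / 2 := i.isLt
    have h2 : ((i : ℕ) : ℝ) < ((N ^ 2 / 2 : ℕ) : ℝ) := by exact_mod_cast h1
    have h3 : ((N ^ 2 / 2 : ℕ) : ℝ) ≤ ((N : ℝ) ^ 2) / 2 := by
      calc ((N ^ 2 / 2 : ℕ) : ℝ) ≤ ((N ^ 2 : ℕ) : ℝ) / ((2 : ℕ) : ℝ) := Nat.cast_div_le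
        _ = (N : ℝ) ^ 2 / 2 := by push_cast; ring
    rw [div_le_div_iff₀ (by positivity) (by norm_num)]
    nlinarith
  exact ⟨fun k => hcoord _, fun k => hcoord _, by rw [hta]; linarith, by rw [hta]; linarith⟩

end Heis

set_option maxHeartbeats 1600000 in
/-- **Theorem (positivity of the vertical coordinate).** If moreover `r < 1/(16n)`, then
every `p ∈ C_{r,N} ∖ S_0(C_{r,N})` satisfies `p_{2n+1} > 0`. -/
theorem stmt16 (n N : ℕ) (hn : 1 ≤ n) (hN : 2 ≤ N) (hNeven : Even N)
    (r : ℝ) (hr0 : 0 < r) (hrN : r < 1 / N) (hr16 : r < 1 / (16 * n))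
    [MetricSpace (Heis n)]
    (hdist_eq : ∀ p q : Heis n, dist p q = Heis.hdist p q)
    (C : Set (Heis n)) (hCc : IsCompact C) (hCne : C.Nonempty)
    (hCinv : Heis.IsInvariantSet n N r C) :
    ∀ p ∈ C \ (Heis.canS n N r none '' C), 0 < p.t := by
  classical
  have hn1 : (1:ℝ) ≤ (n:ℝ) := by exact_mod_cast hn
  have hrm : r * (n:ℝ) < 1/16 := by
    have h16n : (0:ℝ) < 16 * (n:ℝ) := by positivity
    rw [lt_div_iff₀ h16n] at hr16
    nlinarith
  have hr116 : r ≤ 1/16 := by nlinarith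
  have hCeq : C = ⋃ j : Heis.CanIdx n N, Heis.canS n N r j '' C := hCinv
  have hmem : ∀ q ∈ C, ∃ j : Option (((Fin n ⊕ Fin n) → Fin N) × Fin (N ^ 2 / 2)),
      ∃ q' ∈ C, Heis.canS n N r j q' = q := by
    intro q hq
    rw [hCeq] at hq
    simp only [Set.mem_iUnion, Set.mem_image] at hq
    obtain ⟨j, q', hq', hjq⟩ := hq
    exact ⟨j, q', hq', hjq⟩
  obtain ⟨q0, hq0⟩ := hCne
  obtain ⟨R, hR⟩ := Metric.isBounded_iff.mp hCc.isBounded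
  have hR0 : 0 ≤ R := le_trans dist_nonneg (hR hq0 hq0)
  have habs_le : ∀ x Q : ℝ, x ^ 2 ≤ Q ^ 2 → 0 ≤ Q → |x| ≤ Q := by
    intro x Q h hQ
    rw [abs_le]
    constructor <;> nlinarith [sq_nonneg (x - Q), sq_nonneg (x + Q)]
  have hxy : ∀ q ∈ C, Heis.hsq (q0⁻¹ * q) ≤ R ^ 2 ∧ |(q0⁻¹ * q).t| ≤ R ^ 2 := by
    intro q hq
    have hk : Heis.knorm (q0⁻¹ * q) ≤ R := by
      have := hR hq0 hq
      rwa [hdist_eq] at this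
    set y := Heis.hsq (q0⁻¹ * q) ^ 2 + (q0⁻¹ * q).t ^ 2 with hy
    have hhsq0 : 0 ≤ Heis.hsq (q0⁻¹ * q) := by
      unfold Heis.hsq; positivity
    have hy0 : 0 ≤ y := by positivity
    have hk' : y ^ ((1:ℝ)/4) ≤ R := hk
    have hyR : y ≤ R ^ 4 := by
      have heq : y = (y ^ ((1:ℝ)/4)) ^ (4:ℕ) := by
        rw [← Real.rpow_natCast (y ^ ((1:ℝ)/4)) 4, ← Real.rpow_mul hy0]
        norm_num
      calc y = (y ^ ((1:ℝ)/4)) ^ (4:ℕ) := heq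
        _ ≤ R ^ (4:ℕ) := pow_le_pow_left₀ (Real.rpow_nonneg hy0 _) hk' 4
    have hyy : Heis.hsq (q0⁻¹ * q) ^ 2 + (q0⁻¹ * q).t ^ 2 ≤ R ^ 4 := hyR
    constructor
    · nlinarith [sq_nonneg ((q0⁻¹ * q).t), sq_nonneg (Heis.hsq (q0⁻¹ * q) + R ^ 2),
        sq_nonneg R]
    · refine habs_le _ _ ?_ (by positivity)
      nlinarith [sq_nonneg (Heis.hsq (q0⁻¹ * q))]
  obtain ⟨B, hB0, hq0aR, hq0bR⟩ : ∃ B : ℝ, 0 ≤ B ∧ (∀ k, |q0.a k| + R ≤ B) ∧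
      (∀ k, |q0.b k| + R ≤ B) := by
    refine ⟨‖q0.a‖ + ‖q0.b‖ + R, by positivity, fun k => ?_, fun k => ?_⟩
    · have h1 : |q0.a k| ≤ ‖q0.a‖ := by
        rw [← Real.norm_eq_abs]; exact norm_le_pi_norm q0.a k
      have h2 : (0:ℝ) ≤ ‖q0.b‖ := norm_nonneg _
      linarith
    · have h1 : |q0.b k| ≤ ‖q0.b‖ := by
        rw [← Real.norm_eq_abs]; exact norm_le_pi_norm q0.b k
      have h2 : (0:ℝ) ≤ ‖q0.a‖ := norm_nonneg _
      linarith
  have hq0a : ∀ k, |q0.a k| ≤ B := fun k => by have := hq0aR k; linarith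
  have hq0b : ∀ k, |q0.b k| ≤ B := fun k => by have := hq0bR k; linarith
  have hxcoord : ∀ q ∈ C, ∀ k, |(q0⁻¹ * q).a k| ≤ R ∧ |(q0⁻¹ * q).b k| ≤ R := by
    intro q hq k
    obtain ⟨hhsq, -⟩ := hxy q hq
    have hsq_eq : Heis.hsq (q0⁻¹ * q)
        = ∑ i, ((q0⁻¹ * q).a i) ^ 2 + ∑ i, ((q0⁻¹ * q).b i) ^ 2 := rfl
    have ha1 : ((q0⁻¹ * q).a k) ^ 2 ≤ ∑ i, ((q0⁻¹ * q).a i) ^ 2 :=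
      Finset.single_le_sum (f := fun i => ((q0⁻¹ * q).a i) ^ 2)
        (fun i _ => sq_nonneg _) (Finset.mem_univ k)
    have hb1 : ((q0⁻¹ * q).b k) ^ 2 ≤ ∑ i, ((q0⁻¹ * q).b i) ^ 2 :=
      Finset.single_le_sum (f := fun i => ((q0⁻¹ * q).b i) ^ 2)
        (fun i _ => sq_nonneg _) (Finset.mem_univ k)
    have ha0 : (0:ℝ) ≤ ∑ i, ((q0⁻¹ * q).a i) ^ 2 := by positivity
    have hb0 : (0:ℝ) ≤ ∑ i, ((q0⁻¹ * q).b i) ^ 2 := by positivity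
    exact ⟨habs_le _ _ (by linarith) hR0, habs_le _ _ (by linarith) hR0⟩
  have hcoordC : ∀ q ∈ C, ∀ k, |q.a k| ≤ B ∧ |q.b k| ≤ B := by
    intro q hq k
    have ha : q.a k = q0.a k + (q0⁻¹ * q).a k := by
      rw [Heis.mul_a', Heis.inv_a']; ring
    have hb : q.b k = q0.b k + (q0⁻¹ * q).b k := by
      rw [Heis.mul_b', Heis.inv_b']; ring
    obtain ⟨hxa, hxb⟩ := hxcoord q hq k
    constructor
    · rw [ha]
      calc |q0.a k + (q0⁻¹ * q).a k| ≤ |q0.a k| + |(q0⁻¹ * q).a k| := abs_add_le _ _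
        _ ≤ B := by have := hq0aR k; linarith
    · rw [hb]
      calc |q0.b k + (q0⁻¹ * q).b k| ≤ |q0.b k| + |(q0⁻¹ * q).b k| := abs_add_le _ _
        _ ≤ B := by have := hq0bR k; linarith
  obtain ⟨Bt, htcrude⟩ : ∃ Bt : ℝ, ∀ q ∈ C, |q.t| ≤ Bt := by
    refine ⟨R ^ 2 + |q0.t| + 2 * (2 * (n:ℝ) * (B * B)), fun q hq => ?_⟩
    have hteq : q.t = (q0⁻¹ * q).t + q0.t - 2 * Heis.symp q0 q := by
      rw [Heis.mul_t', Heis.inv_t', Heis.symp_inv_left]; ring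
    have hs : |Heis.symp q0 q| ≤ 2 * (n:ℝ) * (B * B) :=
      Heis.abs_symp_le q0 q B B hB0 hq0a hq0b
        (fun k => (hcoordC q hq k).1) (fun k => (hcoordC q hq k).2)
    obtain ⟨-, hxt⟩ := hxy q hq
    rw [hteq]
    calc |(q0⁻¹ * q).t + q0.t - 2 * Heis.symp q0 q|
        ≤ |(q0⁻¹ * q).t + q0.t| + |2 * Heis.symp q0 q| := abs_sub _ _
      _ ≤ (|(q0⁻¹ * q).t| + |q0.t|) + 2 * |Heis.symp q0 q| := by
          have h1 := abs_add_le ((q0⁻¹ * q).t) q0.t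
          have h2 : |(2:ℝ) * Heis.symp q0 q| = 2 * |Heis.symp q0 q| := by
            rw [abs_mul]; norm_num
          linarith [le_of_eq h2]
      _ ≤ R ^ 2 + |q0.t| + 2 * (2 * (n:ℝ) * (B * B)) := by linarith
  set SA : Set ℝ := {x | ∃ q ∈ C, ∃ k : Fin n, x = |q.a k| ∨ x = |q.b k|} with hSAdef
  set ST : Set ℝ := (fun q : Heis n => |q.t|) '' C with hSTdef
  have hSAne : SA.Nonempty := ⟨|q0.a ⟨0, hn⟩|, q0, hq0, ⟨0, hn⟩, Or.inl rfl⟩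
  have hSAbd : BddAbove SA := by
    refine ⟨B, ?_⟩
    rintro x ⟨q, hq, k, rfl | rfl⟩
    · exact (hcoordC q hq k).1
    · exact (hcoordC q hq k).2
  have hSTne : ST.Nonempty := ⟨|q0.t|, q0, hq0, rfl⟩
  have hSTbd : BddAbove ST := by
    refine ⟨Bt, ?_⟩
    rintro x ⟨q, hq, rfl⟩
    exact htcrude q hq
  set A : ℝ := sSup SA with hAdef
  set T : ℝ := sSup ST with hTdef
  have hAq : ∀ q ∈ C, ∀ k, |q.a k| ≤ A ∧ |q.b k| ≤ A := fun q hq k =>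
    ⟨le_csSup hSAbd ⟨q, hq, k, Or.inl rfl⟩, le_csSup hSAbd ⟨q, hq, k, Or.inr rfl⟩⟩
  have hTq : ∀ q ∈ C, |q.t| ≤ T := fun q hq => le_csSup hSTbd ⟨q, hq, rfl⟩
  have hA0 : 0 ≤ A := le_trans (abs_nonneg _) (hAq q0 hq0 ⟨0, hn⟩).1
  have hT0 : 0 ≤ T := le_trans (abs_nonneg _) (hTq q0 hq0)
  -- recursion for A
  have hArec : A ≤ 1 + r * A := by
    apply csSup_le hSAne
    rintro x ⟨q, hq, k, rfl | rfl⟩ <;>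
      obtain ⟨j, q', hq', hjq⟩ := hmem q hq <;> rw [← hjq]
    · rcases j with _ | ⟨g, i⟩
      · have h : (Heis.canS n N r none q').a k = r * q'.a k := rfl
        rw [h, abs_mul, abs_of_pos hr0]
        nlinarith [(hAq q' hq' k).1, abs_nonneg (q'.a k)]
      · have h : (Heis.canS n N r (some (g, i)) q').a k
            = (Heis.canPt n N g i).a k + r * q'.a k := rfl
        rw [h]
        obtain ⟨hca, -, -, -⟩ := Heis.canPt_bounds (n := n) hN g i
        calc |(Heis.canPt n N g i).a k + r * q'.a k|
            ≤ |(Heis.canPt n N g i).a k| + |r * q'.a k| := abs_add_le _ _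
          _ ≤ 1 + r * A := by
              rw [abs_mul, abs_of_pos hr0]
              nlinarith [(hAq q' hq' k).1, hca k, abs_nonneg (q'.a k)]
    · rcases j with _ | ⟨g, i⟩
      · have h : (Heis.canS n N r none q').b k = r * q'.b k := rfl
        rw [h, abs_mul, abs_of_pos hr0]
        nlinarith [(hAq q' hq' k).2, abs_nonneg (q'.b k)]
      · have h : (Heis.canS n N r (some (g, i)) q').b k
            = (Heis.canPt n N g i).b k + r * q'.b k := rfl
        rw [h]
        obtain ⟨-, hcb, -, -⟩ := Heis.canPt_bounds (n := n) hN g i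
        calc |(Heis.canPt n N g i).b k + r * q'.b k|
            ≤ |(Heis.canPt n N g i).b k| + |r * q'.b k| := abs_add_le _ _
          _ ≤ 1 + r * A := by
              rw [abs_mul, abs_of_pos hr0]
              nlinarith [(hAq q' hq' k).2, hcb k, abs_nonneg (q'.b k)]
  -- recursion for T
  have hTrec : T ≤ 1 + 4 * r * (n:ℝ) * A + r ^ 2 * T := by
    apply csSup_le hSTne
    rintro x ⟨q, hq, rfl⟩
    show |q.t| ≤ 1 + 4 * r * (n:ℝ) * A + r ^ 2 * T
    obtain ⟨j, q', hq', hjq⟩ := hmem q hq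
    rw [← hjq]
    rcases j with _ | ⟨g, i⟩
    · have h : (Heis.canS n N r none q').t = r ^ 2 * q'.t := rfl
      rw [h, abs_mul, abs_of_nonneg (sq_nonneg r)]
      have h1 : r ^ 2 * |q'.t| ≤ r ^ 2 * T :=
        mul_le_mul_of_nonneg_left (hTq q' hq') (sq_nonneg r)
      nlinarith [mul_nonneg (mul_nonneg (mul_nonneg (by norm_num : (0:ℝ) ≤ 4) hr0.le)
        (by positivity : (0:ℝ) ≤ (n:ℝ))) hA0]
    · have h : (Heis.canS n N r (some (g, i)) q').t
          = (Heis.canPt n N g i).t + r ^ 2 * q'.t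
            - 2 * (r * Heis.symp (Heis.canPt n N g i) q') := by
        show ((Heis.canPt n N g i) * Heis.dil r q').t = _
        rw [Heis.mul_t', Heis.dil_t', Heis.symp_dil_right]
      obtain ⟨hca, hcb, hct1, hct2⟩ := Heis.canPt_bounds (n := n) hN g i
      have hs := Heis.abs_symp_le (Heis.canPt n N g i) q' 1 A zero_le_one hca hcb
        (fun k => (hAq q' hq' k).1) (fun k => (hAq q' hq' k).2)
      have hqt := abs_le.mp (hTq q' hq')
      have hsym := abs_le.mp hs
      rw [h, abs_le]
      have hu1 := mul_le_mul_of_nonneg_left hqt.1 (sq_nonneg r)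
      have hu2 := mul_le_mul_of_nonneg_left hqt.2 (sq_nonneg r)
      have hv1 := mul_le_mul_of_nonneg_left hsym.1 hr0.le
      have hv2 := mul_le_mul_of_nonneg_left hsym.2 hr0.le
      constructor <;> nlinarith [hu1, hu2, hv1, hv2]
  -- numeric conclusion
  have hA1 : A ≤ 16 / 15 := by nlinarith
  have hrnA : r * (n:ℝ) * A ≤ 1 / 15 := by nlinarith
  have hr2 : r ^ 2 ≤ 1 / 256 := by nlinarith
  have hr2T : r ^ 2 * T ≤ T / 256 := by nlinarith
  have hT1 : T ≤ 2 := by nlinarith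
  intro p hp
  obtain ⟨hpC, hpn⟩ := hp
  obtain ⟨j, q, hq, hjq⟩ := hmem p hpC
  rcases j with _ | ⟨g, i⟩
  · exact absurd ⟨q, hq, hjq⟩ hpn
  · have ht : p.t = (Heis.canPt n N g i).t + r ^ 2 * q.t
        - 2 * (r * Heis.symp (Heis.canPt n N g i) q) := by
      rw [← hjq]
      show ((Heis.canPt n N g i) * Heis.dil r q).t = _
      rw [Heis.mul_t', Heis.dil_t', Heis.symp_dil_right]
    obtain ⟨hca, hcb, hct1, hct2⟩ := Heis.canPt_bounds (n := n) hN g i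
    have hs := Heis.abs_symp_le (Heis.canPt n N g i) q 1 A zero_le_one hca hcb
      (fun k => (hAq q hq k).1) (fun k => (hAq q hq k).2)
    have hqt := abs_le.mp (hTq q hq)
    have hsym := abs_le.mp hs
    have hu1 := mul_le_mul_of_nonneg_left hqt.1 (sq_nonneg r)
    have hv2 := mul_le_mul_of_nonneg_left hsym.2 hr0.le
    rw [ht]
    nlinarith [hu1, hv2, hr2T, hT1, hrnA]
end
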